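/- arXiv:1909.11440 — 2 statements merged into one kernel-verified Lean document; each statement's English description precedes it below -/
import Mathlib

section
/- If M(K) is not minimal (i.e., contains a dominated vertex), then K has at least one vertex of degree 1. -/
open Finset

/-- An abstract simplicial complex on vertex type `V`. -/
structure SComplex (V : Type*) where
  faces : Finset V → Prop
  not_empty : ¬ faces ∅
  down_closed : ∀ {σ τ : Finset V}, faces τ → σ ⊆ τ → σ.Nonempty → faces σ

/-- The complex generated by a set of simplices (downward closure). -/
def ofGens {V : Type*} (gens : Set (Finset V)) : SComplex V where
  faces σ := σ.Nonempty ∧ ∃ τ ∈ gens, σ ⊆ τ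
  not_empty h := by simpa using h.1
  down_closed := by
    rintro σ τ ⟨-, τ', hτ', hsub'⟩ hsub hne
    exact ⟨hne, τ', hτ', hsub.trans hsub'⟩

/-- A primitive (gradient) vector field on `K`: a single regular pair `(σ, τ)`
with `σ` a codimension-one face of `τ`. -/
structure VPair {V : Type*} (K : SComplex V) where
  lo : Finset V
  hi : Finset V
  lo_face : K.faces lo
  hi_face : K.faces hi
  lo_sub : lo ⊆ hi
  card_eq : hi.card = lo.card + 1

noncomputable instance {V : Type*} (K : SComplex V) : DecidableEq (VPair K) :=
  Classical.decEq _

/-- Two primitive pairs share no simplex. -/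
def VPair.Compatible {V : Type*} {K : SComplex V} (p q : VPair K) : Prop :=
  p.lo ≠ q.lo ∧ p.lo ≠ q.hi ∧ p.hi ≠ q.lo ∧ p.hi ≠ q.hi

/-- A discrete vector field: each simplex occurs in at most one pair. -/
def IsDVF {V : Type*} {K : SComplex V} (W : Set (VPair K)) : Prop :=
  ∀ p ∈ W, ∀ q ∈ W, p ≠ q → VPair.Compatible p q

/-- Existence of a nontrivial closed `V`-path. -/
def HasClosedPath {V : Type*} {K : SComplex V} (W : Set (VPair K)) : Prop :=
  ∃ k : ℕ, 0 < k ∧ ∃ c : ZMod k → VPair K, (∀ i, c i ∈ W) ∧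
    ∀ i, (c (i + 1)).lo ⊆ (c i).hi ∧ (c (i + 1)).lo ≠ (c i).lo ∧
      (c (i + 1)).lo.card + 1 = (c i).hi.card

/-- A gradient vector field: a discrete vector field with no nontrivial closed path. -/
def IsGVF {V : Type*} {K : SComplex V} (W : Set (VPair K)) : Prop :=
  IsDVF W ∧ ¬ HasClosedPath W

/-- The Morse complex of `K`: vertices are primitive gradient vector fields,
simplices are gradient vector fields. -/
def MorseComplex {V : Type*} (K : SComplex V) : SComplex (VPair K) where
  faces S := S.Nonempty ∧ IsGVF {p | p ∈ S}
  not_empty h := by simpa using h.1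
  down_closed := by
    rintro σ τ ⟨hne', hdvf, hnc⟩ hsub hne
    refine ⟨hne, fun p hp q hq hpq => hdvf p (hsub hp) q (hsub hq) hpq, fun h => hnc ?_⟩
    obtain ⟨k, hk, c, hc, hpath⟩ := h
    exact ⟨k, hk, c, fun i => hsub (hc i), hpath⟩

/-- The pure Morse complex: the subcomplex of `MorseComplex K` generated by the
facets of maximum dimension (maximum gradient vector fields). -/
def pureMorse {V : Type*} (K : SComplex V) : SComplex (VPair K) where
  faces S := (MorseComplex K).faces S ∧ ∃ T : Finset (VPair K), S ⊆ T ∧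
      (MorseComplex K).faces T ∧
      ∀ T' : Finset (VPair K), (MorseComplex K).faces T' → T'.card ≤ T.card
  not_empty h := (MorseComplex K).not_empty h.1
  down_closed := by
    rintro σ τ ⟨hτ, T, hsub', hT, hmax⟩ hsub hne
    exact ⟨(MorseComplex K).down_closed hτ hsub hne, T, hsub.trans hsub', hT, hmax⟩

/-- `σ` is a facet (maximal simplex) of `K`. -/
def IsFacet {V : Type*} (K : SComplex V) (σ : Finset V) : Prop :=
  K.faces σ ∧ ∀ τ, K.faces τ → σ ⊆ τ → σ = τ

/-- `w` dominates `w'`: every facet containing `w'` contains `w`. -/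
def Dominates {V : Type*} (K : SComplex V) (w w' : V) : Prop :=
  ∀ σ, IsFacet K σ → w' ∈ σ → w ∈ σ

/-- `K` is minimal: no vertex dominates another vertex. -/
def MinimalComplex {V : Type*} (K : SComplex V) : Prop :=
  ∀ w w' : V, K.faces {w} → K.faces {w'} → w ≠ w' → ¬ Dominates K w w'

/-- Strong collapsibility of a face predicate: a sequence of removals of
dominated vertices reaching a single point. -/
inductive SCAux {V : Type*} : (Finset V → Prop) → Prop
  | point (F : Finset V → Prop) (v : V) (h : ∀ σ, F σ ↔ σ = {v}) : SCAux F
  | step (F : Finset V → Prop) (w w' : V) (hne : w ≠ w') (hw : F {w}) (hw' : F {w'})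
      (hdom : ∀ σ, (F σ ∧ ∀ τ, F τ → σ ⊆ τ → σ = τ) → w' ∈ σ → w ∈ σ)
      (h : SCAux (fun σ => F σ ∧ w' ∉ σ)) : SCAux F

def StronglyCollapsible {V : Type*} (K : SComplex V) : Prop := SCAux K.faces

/-- `F` strongly collapses to `G` by a sequence of removals of dominated vertices. -/
inductive SCTo {V : Type*} : (Finset V → Prop) → (Finset V → Prop) → Prop
  | refl (F : Finset V → Prop) : SCTo F F
  | step (F G : Finset V → Prop) (w w' : V) (hne : w ≠ w') (hw : F {w}) (hw' : F {w'})
      (hdom : ∀ σ, (F σ ∧ ∀ τ, F τ → σ ⊆ τ → σ = τ) → w' ∈ σ → w ∈ σ)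
      (h : SCTo (fun σ => F σ ∧ w' ∉ σ) G) : SCTo F G

/-- Collapsibility (Forman): removal of free pairs down to a point. -/
inductive CollAux {V : Type*} : (Finset V → Prop) → Prop
  | point (F : Finset V → Prop) (v : V) (h : ∀ σ, F σ ↔ σ = {v}) : CollAux F
  | step (F : Finset V → Prop) (σ τ : Finset V) (hστ : σ ⊂ τ) (hσ : F σ) (hτ : F τ)
      (hfree : ∀ ρ, F ρ → σ ⊂ ρ → ρ = τ)
      (h : CollAux (fun ρ => F ρ ∧ ρ ≠ σ ∧ ρ ≠ τ)) : CollAux F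

def Collapsible {V : Type*} (K : SComplex V) : Prop := CollAux K.faces

/-- The degree of a vertex: the number of edges of `K` containing it. -/
noncomputable def sdeg {V : Type*} (K : SComplex V) (x : V) : ℕ :=
  Set.ncard {σ : Finset V | K.faces σ ∧ σ.card = 2 ∧ x ∈ σ}

/-- Image of a finset, with a classical decidability instance. -/
noncomputable def fimage {V W : Type*} (f : V → W) (σ : Finset V) : Finset W :=
  haveI := Classical.decEq W
  σ.image f

/-- An isomorphism between two simplicial complexes given by face predicates. -/
structure ComplexIso {V W : Type*} (F : Finset V → Prop) (G : Finset W → Prop) where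
  toFun : V → W
  invFun : W → V
  left_inv : ∀ x, F {x} → invFun (toFun x) = x
  right_inv : ∀ y, G {y} → toFun (invFun y) = y
  map_face : ∀ σ, F σ → G (fimage toFun σ)
  inv_face : ∀ τ, G τ → F (fimage invFun τ)

/-- The join of two simplicial complexes. -/
def sJoin {V W : Type*} [DecidableEq V] [DecidableEq W] (K : SComplex V) (L : SComplex W) :
    SComplex (V ⊕ W) :=
  ofGens {σ | ∃ α β, (K.faces α ∨ α = ∅) ∧ (L.faces β ∨ β = ∅) ∧
    σ = α.image Sum.inl ∪ β.image Sum.inr}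

/-- The disjoint union of two simplicial complexes. -/
def sDisjUnion {V W : Type*} [DecidableEq V] [DecidableEq W] (K : SComplex V) (L : SComplex W) :
    SComplex (V ⊕ W) :=
  ofGens ({σ | ∃ α, K.faces α ∧ σ = α.image Sum.inl} ∪
          {σ | ∃ β, L.faces β ∧ σ = β.image Sum.inr})

/-- The simplicial complex of a simple graph (vertices and edges). -/
def graphComplex {V : Type*} [DecidableEq V] (G : SimpleGraph V) : SComplex V :=
  ofGens ({σ | ∃ x, σ = {x}} ∪ {σ | ∃ x y, G.Adj x y ∧ σ = ({x, y} : Finset V)})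

/-- Attach a leaf (pendant edge) to `K` at the vertex `x`. -/
def attachLeaf {V : Type*} [DecidableEq V] (K : SComplex V) (x : V) : SComplex (V ⊕ Unit) :=
  ofGens ({σ | ∃ α, K.faces α ∧ σ = α.image Sum.inl} ∪
          {({Sum.inl x, Sum.inr ()} : Finset (V ⊕ Unit))})

/-- The cycle graph on `ZMod n`. -/
def cycleGraph (n : ℕ) : SimpleGraph (ZMod n) :=
  SimpleGraph.fromRel (fun i j => j = i + 1)

/-- Attach one new leaf to every vertex of a graph. -/
def addLeaves {V : Type*} [DecidableEq V] (G : SimpleGraph V) : SComplex (V ⊕ V) :=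
  ofGens ({σ | ∃ x y, G.Adj x y ∧ σ = ({Sum.inl x, Sum.inl y} : Finset (V ⊕ V))} ∪
          {σ | ∃ u, σ = ({Sum.inl u, Sum.inr u} : Finset (V ⊕ V))})

/-- The geometric realization of `K`, inside `V → ℝ`. -/
def realization {V : Type*} (K : SComplex V) : Set (V → ℝ) :=
  {f | ∃ σ, K.faces σ ∧ (∀ x, 0 ≤ f x) ∧ (∀ x, f x ≠ 0 → x ∈ σ) ∧ ∑ x ∈ σ, f x = 1}

/-- A Hasse-diagram edge of a poset: a covering pair. -/
structure HEdge (P : Type*) [PartialOrder P] where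
  lo : P
  hi : P
  cov : lo ⋖ hi

noncomputable instance {P : Type*} [PartialOrder P] : DecidableEq (HEdge P) :=
  Classical.decEq _

def HEdge.Compat {P : Type*} [PartialOrder P] (p q : HEdge P) : Prop :=
  p.lo ≠ q.lo ∧ p.lo ≠ q.hi ∧ p.hi ≠ q.lo ∧ p.hi ≠ q.hi

def HasPosetCycle {P : Type*} [PartialOrder P] (W : Set (HEdge P)) : Prop :=
  ∃ k : ℕ, 0 < k ∧ ∃ c : ZMod k → HEdge P, (∀ i, c i ∈ W) ∧
    ∀ i, (c (i + 1)).lo ⋖ (c i).hi ∧ (c (i + 1)).lo ≠ (c i).lo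

/-- The generalized Morse complex `f(P)` of a poset: simplices are acyclic
matchings of the Hasse diagram of `P`. -/
def genMorse (P : Type*) [PartialOrder P] : SComplex (HEdge P) where
  faces S := S.Nonempty ∧ (∀ p ∈ S, ∀ q ∈ S, p ≠ q → HEdge.Compat p q) ∧
    ¬ HasPosetCycle {p | p ∈ S}
  not_empty h := by simpa using h.1
  down_closed := by
    rintro σ τ ⟨-, hm, hc⟩ hsub hne
    refine ⟨hne, fun p hp q hq h => hm p (hsub hp) q (hsub hq) h, fun h => hc ?_⟩
    obtain ⟨k, hk, c, hc', hp⟩ := h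
    exact ⟨k, hk, c, fun i => hsub (hc' i), hp⟩

/-- The automorphism group of a simplicial complex, as a subgroup of `Perm V`. -/
def autGroup {V : Type*} [DecidableEq V] (K : SComplex V) : Subgroup (Equiv.Perm V) where
  carrier := {e | ∀ σ : Finset V, K.faces σ ↔ K.faces (σ.image e)}
  one_mem' := by intro σ; simp
  mul_mem' := by
    intro a b ha hb σ
    rw [hb σ, ha (σ.image b)]
    simp [Finset.image_image, Equiv.Perm.coe_mul]
  inv_mem' := by
    intro a ha σ
    have := ha (σ.image ⇑a⁻¹)
    simpa [Finset.image_image, Function.comp_def,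
      Finset.image_id'] using this.symm

/-- The full subcomplex of `K` on a set `S` of vertices. -/
def restrictTo {V : Type*} (K : SComplex V) (S : Set V) : Finset V → Prop :=
  fun σ => K.faces σ ∧ ∀ x ∈ σ, x ∈ S

/-- `S` spans a fully connected subcomplex: `K = (K∣S) * (K∣Sᶜ)`. -/
def FullyConnected {V : Type*} [DecidableEq V] (K : SComplex V) (S : Set V) : Prop :=
  ∀ σ : Finset V, K.faces σ ↔ (σ.Nonempty ∧ ∃ α β : Finset V,
    (restrictTo K S α ∨ α = ∅) ∧ ((K.faces β ∧ ∀ x ∈ β, x ∉ S) ∨ β = ∅) ∧ σ = α ∪ β)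

/-- The primitive pair `(x, xy)` on an edge `{x,y}`. -/
def edgePair {V : Type*} [DecidableEq V] (K : SComplex V) (x y : V) (hxy : x ≠ y)
    (h : K.faces {x, y}) : VPair K where
  lo := {x}
  hi := {x, y}
  lo_face := K.down_closed h (by simp) (Finset.singleton_nonempty x)
  hi_face := h
  lo_sub := by simp
  card_eq := by
    rw [Finset.card_singleton, Finset.card_insert_of_notMem (by simp [hxy]),
      Finset.card_singleton]

/-! If `p` dominates `p'` in `M(K)`, then `p` is compatible with every primitive field that forms a
gradient vector field together with `p'`, since such a pair extends to a facet of `M(K)`. With no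
vertex of degree 1 one can always build a pair `q` that forms a gradient vector field with `p'` but
shares a simplex with `p = (σ, τ)`: a pair `(ν, σ)` on a facet `ν` of `σ` when `dim σ ≥ 1`, and
for `σ = {x}`, `τ = {x, y}` either the pair `({y}, τ)` or a pair `({x}, e)` on a second edge `e`
at `x`. -/

lemma Finset.exists_erase_ne_of_card_ne {V : Type*} [DecidableEq V] {s t u : Finset V}
    (hs : 2 ≤ s.card) (htu : t.card ≠ u.card) : ∃ a ∈ s, s.erase a ≠ t ∧ s.erase a ≠ u := by
  obtain ⟨a, ha, b, hb, hab⟩ := Finset.one_lt_card.mp hs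
  have hcard : (s.erase a).card = (s.erase b).card := by
    rw [card_erase_of_mem ha, card_erase_of_mem hb]
  have hne : s.erase a ≠ s.erase b := fun h => hab ((erase_inj s ha).mp h)
  by_contra! hbad
  have hmem : ∀ c ∈ s, s.erase c = t ∨ s.erase c = u :=
    fun c hc => or_iff_not_imp_left.mpr (hbad c hc)
  rcases hmem a ha with rfl | rfl <;> rcases hmem b hb with h | h
  exacts [hne h.symm, htu (h ▸ hcard), htu (h ▸ hcard.symm), hne h.symm]

lemma SComplex.exists_isFacet_superset {U : Type*} [Finite U] (L : SComplex U) {S : Finset U}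
    (hS : L.faces S) : ∃ F, IsFacet L F ∧ S ⊆ F := by
  obtain ⟨F, hSF, hF⟩ := Finite.exists_le_maximal (p := L.faces) hS
  exact ⟨F, ⟨hF.prop, fun τ hτ hFτ => le_antisymm hFτ (hF.2 hτ hFτ)⟩, hSF⟩

lemma exists_edge_ne_of_sdeg_ne_one {V : Type*} {K : SComplex V} {x : V} (hx : sdeg K x ≠ 1)
    {τ : Finset V} (hτ : K.faces τ) (hτ2 : τ.card = 2) (hxτ : x ∈ τ) :
    ∃ e, K.faces e ∧ e.card = 2 ∧ x ∈ e ∧ e ≠ τ := by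
  by_contra! hno
  apply hx
  have : {σ : Finset V | K.faces σ ∧ σ.card = 2 ∧ x ∈ σ} = {τ} :=
    Set.eq_singleton_iff_unique_mem.mpr ⟨⟨hτ, hτ2, hxτ⟩, fun e ⟨he, he2, hxe⟩ => hno e he he2 hxe⟩
  rw [sdeg, this, Set.ncard_singleton]

namespace VPair

variable {V : Type*} {K : SComplex V}

/-- `q` can follow `p` in a `V`-path. -/
def StepsTo (p q : VPair K) : Prop :=
  q.lo ⊆ p.hi ∧ q.lo.card + 1 = p.hi.card

instance [Finite V] : Finite (VPair K) :=
  Finite.of_injective (fun p : VPair K => (p.lo, p.hi))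
    (fun p q h => by cases p; cases q; simpa using h)

lemma lo_nonempty (p : VPair K) : p.lo.Nonempty :=
  nonempty_iff_ne_empty.mpr fun h => K.not_empty (h ▸ p.lo_face)

lemma Compatible.symm {p q : VPair K} (h : p.Compatible q) : q.Compatible p :=
  ⟨h.1.symm, h.2.2.1.symm, h.2.1.symm, h.2.2.2.symm⟩

end VPair

section MorseComplex

variable {V : Type*} {K : SComplex V}

lemma not_hasClosedPath_singleton (p : VPair K) :
    ¬ HasClosedPath {r | r ∈ ({p} : Finset (VPair K))} := by
  rintro ⟨k, -, c, hmem, hpath⟩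
  have hc : ∀ i, c i = p := fun i => by simpa using hmem i
  exact (hpath 0).2.1 (by rw [hc, hc])

lemma not_hasClosedPath_pair {p q : VPair K} (h : ¬ (p.StepsTo q ∧ q.StepsTo p)) :
    ¬ HasClosedPath {r | r ∈ ({p, q} : Finset (VPair K))} := by
  rintro ⟨k, -, c, hmem, hpath⟩
  have hc : ∀ i, c i = p ∨ c i = q := fun i => by simpa using hmem i
  have hstep : ∀ i, (c i).StepsTo (c (i + 1)) ∧ c (i + 1) ≠ c i :=
    fun i => ⟨⟨(hpath i).1, (hpath i).2.2⟩, fun h => (hpath i).2.1 (by rw [h])⟩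
  obtain ⟨h01, hne01⟩ := hstep 0
  obtain ⟨h12, hne12⟩ := hstep (0 + 1)
  rcases hc 0 with h0 | h0 <;> rcases hc (0 + 1) with h1 | h1 <;>
    rcases hc (0 + 1 + 1) with h2 | h2 <;> rw [h0, h1] at h01 hne01 <;>
    rw [h1, h2] at h12 hne12 <;> tauto

lemma morseComplex_faces_singleton (p : VPair K) : (MorseComplex K).faces {p} := by
  refine ⟨singleton_nonempty p, fun a ha b hb hab => ?_, not_hasClosedPath_singleton p⟩
  simp only [Set.mem_ofPred_eq, mem_singleton] at ha hb
  exact absurd (ha.trans hb.symm) hab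

lemma morseComplex_faces_pair {p q : VPair K} (hc : p.Compatible q)
    (h : ¬ (p.StepsTo q ∧ q.StepsTo p)) : (MorseComplex K).faces {p, q} := by
  refine ⟨insert_nonempty p {q}, fun a ha b hb hab => ?_, not_hasClosedPath_pair h⟩
  simp only [Set.mem_ofPred_eq, mem_insert, mem_singleton] at ha hb
  rcases ha with rfl | rfl <;> rcases hb with rfl | rfl
  exacts [absurd rfl hab, hc, hc.symm, absurd rfl hab]

lemma Dominates.compatible [Finite V] {p p' q : VPair K} (hdom : Dominates (MorseComplex K) p p')
    {S : Finset (VPair K)} (hS : (MorseComplex K).faces S) (hp' : p' ∈ S) (hq : q ∈ S)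
    (hpq : p ≠ q) : p.Compatible q := by
  obtain ⟨F, hF, hSF⟩ := (MorseComplex K).exists_isFacet_superset hS
  exact hF.1.2.1 p (hdom F hF (hSF hp')) q (hSF hq) hpq

/-- `{p', q}` is a gradient vector field, while `q` shares a simplex with `p`. -/
def IsNondominationWitness (p p' q : VPair K) : Prop :=
  q ≠ p ∧ ¬ p.Compatible q ∧ p'.Compatible q ∧ ¬ (p'.StepsTo q ∧ q.StepsTo p')

lemma IsNondominationWitness.not_dominates [Finite V] {p p' q : VPair K}
    (hq : IsNondominationWitness p p' q) : ¬ Dominates (MorseComplex K) p p' :=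
  fun hdom => hq.2.1 <| hdom.compatible (morseComplex_faces_pair hq.2.2.1 hq.2.2.2)
    (mem_insert_self p' {q}) (mem_insert_of_mem (mem_singleton_self q)) hq.1.symm

variable [DecidableEq V] {p p' : VPair K}

lemma exists_witness_of_two_le_card (hpp' : p.Compatible p') (h2 : 2 ≤ p.lo.card) :
    ∃ q, IsNondominationWitness p p' q := by
  obtain ⟨a, ha, hν⟩ := Finset.exists_erase_ne_of_card_ne h2 (t := p'.lo) (u := p'.hi)
    (by rw [p'.card_eq]; omega)
  set ν := p.lo.erase a
  have hνσ : ν ⊆ p.lo := erase_subset a p.lo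
  have hν_card : ν.card + 1 = p.lo.card := card_erase_add_one ha
  refine ⟨⟨ν, p.lo, K.down_closed p.lo_face hνσ (card_pos.mp (by omega)), p.lo_face, hνσ,
    hν_card.symm⟩, fun hq => ?_, fun hc => hc.2.1 rfl,
    ⟨hν.1.symm, hpp'.1.symm, hν.2.symm, hpp'.2.1.symm⟩, ?_⟩
  · have := congrArg (fun r : VPair K => r.hi.card) hq
    simp only [p.card_eq] at this
    omega
  · rintro ⟨⟨hντ', hντ'_card⟩, hσ'σ, hσ'σ_card⟩
    simp only at hντ' hντ'_card hσ'σ hσ'σ_card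
    -- `ν` and `σ'` are both the intersection `σ ∩ τ'`, which is a proper face of `σ`.
    set I := p.lo ∩ p'.hi
    have hI : I.card < p.lo.card := by
      refine card_lt_card (ssubset_of_subset_of_ne inter_subset_left fun hI => hpp'.2.1 ?_)
      exact eq_of_subset_of_card_le (hI ▸ inter_subset_right) (by omega)
    have hνI : ν = I := eq_of_subset_of_card_le (subset_inter hνσ hντ') (by omega)
    have hσ'I : p'.lo = I := eq_of_subset_of_card_le (subset_inter hσ'σ p'.lo_sub) (by omega)
    exact hν.1 (hνI.trans hσ'I.symm)

lemma exists_witness_of_edge_of_lo_eq {x y : V} (hx : p.lo = {x}) (hτ : p.hi = {x, y})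
    (hxy : x ≠ y) (hσ' : p'.lo = {y}) (hdeg : sdeg K x ≠ 1) :
    ∃ q, IsNondominationWitness p p' q := by
  obtain ⟨e, he, he_card, hxe, heτ⟩ := exists_edge_ne_of_sdeg_ne_one hdeg p.hi_face
    (by rw [hτ, card_pair hxy]) (by rw [hτ]; exact mem_insert_self x {y})
  have hye : y ∉ e := fun hye => heτ <| Eq.symm <| eq_of_subset_of_card_le
    (hτ ▸ insert_subset hxe (singleton_subset_iff.mpr hye)) (by rw [hτ, card_pair hxy, he_card])
  have hy' : y ∈ p'.hi := p'.lo_sub (hσ' ▸ mem_singleton_self y)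
  refine ⟨⟨{x}, e, hx ▸ p.lo_face, he, singleton_subset_iff.mpr hxe,
      by rw [he_card, card_singleton]⟩,
    fun hq => heτ (congrArg VPair.hi hq), fun hc => hc.1 hx,
    ⟨?_, ?_, ?_, fun (h : p'.hi = e) => hye (h ▸ hy')⟩,
    fun hcyc => hye (hcyc.2.1 (hσ' ▸ mem_singleton_self y))⟩
  · rw [hσ']
    exact singleton_inj.not.mpr hxy.symm
  · exact fun (h : p'.lo = e) => hye (h ▸ hσ' ▸ mem_singleton_self y)
  · intro h
    have := p'.card_eq
    rw [h, hσ'] at this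
    simp at this

lemma exists_witness_of_edge_of_lo_ne {x y : V} (hx : p.lo = {x}) (hτ : p.hi = {x, y})
    (hxy : x ≠ y) (hpp' : p.Compatible p') (hσ' : p'.lo ≠ {y}) :
    ∃ q, IsNondominationWitness p p' q := by
  have hyτ : {y} ⊆ p.hi := by rw [hτ]; simp
  refine ⟨⟨{y}, p.hi, K.down_closed p.hi_face hyτ (singleton_nonempty y), p.hi_face, hyτ,
      by rw [hτ, card_pair hxy, card_singleton]⟩,
    fun hq => hxy (singleton_injective ((congrArg VPair.lo hq).trans hx)).symm,
    fun hc => hc.2.2.2 rfl, ⟨hσ', hpp'.2.2.1.symm, fun h => ?_, hpp'.2.2.2.symm⟩, ?_⟩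
  · have := p'.card_eq
    have := p'.lo_nonempty.card_pos
    rw [h, card_singleton] at *
    omega
  · rintro ⟨-, hσ'τ, hσ'_card⟩
    simp only at hσ'τ hσ'_card
    rw [hτ, card_pair hxy] at hσ'_card
    obtain ⟨v, hv⟩ := card_eq_one.mp (show p'.lo.card = 1 by omega)
    have hvτ : v ∈ p.hi := hσ'τ (hv ▸ mem_singleton_self v)
    rw [hτ, mem_insert, mem_singleton] at hvτ
    rcases hvτ with rfl | rfl
    exacts [hpp'.1 (hx.trans hv.symm), hσ' hv]

lemma exists_witness (hpp' : p.Compatible p') (hdeg : ∀ x, K.faces {x} → sdeg K x ≠ 1) :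
    ∃ q, IsNondominationWitness p p' q := by
  by_cases h2 : 2 ≤ p.lo.card
  · exact exists_witness_of_two_le_card hpp' h2
  obtain ⟨x, hx⟩ := card_eq_one.mp (show p.lo.card = 1 by have := p.lo_nonempty.card_pos; omega)
  have hxτ : x ∈ p.hi := p.lo_sub (hx ▸ mem_singleton_self x)
  obtain ⟨y, hy⟩ := card_eq_one.mp (show (p.hi.erase x).card = 1 by
    rw [card_erase_of_mem hxτ, p.card_eq, hx, card_singleton])
  have hτ : p.hi = {x, y} := by rw [← insert_erase hxτ, hy]
  have hxy : x ≠ y := (mem_erase.mp (hy ▸ mem_singleton_self y : y ∈ p.hi.erase x)).1.symm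
  by_cases hσ' : p'.lo = {y}
  · exact exists_witness_of_edge_of_lo_eq hx hτ hxy hσ' (hdeg x (hx ▸ p.lo_face))
  · exact exists_witness_of_edge_of_lo_ne hx hτ hxy hpp' hσ'

end MorseComplex

/-- if `M(K)` is not minimal, then `K` has a vertex of degree 1. -/
theorem stmt_2 {V : Type*} [Fintype V] (K : SComplex V)
    (h : ¬ MinimalComplex (MorseComplex K)) :
    ∃ x : V, K.faces {x} ∧ sdeg K x = 1 := by
  classical
  by_contra! hdeg
  refine h fun p p' _ _ hne hdom => ?_
  have hpp' : p.Compatible p' := hdom.compatible (morseComplex_faces_singleton p')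
    (mem_singleton_self p') (mem_singleton_self p') hne
  obtain ⟨q, hq⟩ := exists_witness hpp' hdeg
  exact hq.not_dominates hdom
end

section
/- Let K be a simplicial complex with a leaf {a, ab} and let c be a neighbor of b with c ≠ a. Then the vertex (b, bc) of the Morse complex M(K) is dominated by the vertex (a, ab). -/
open Finset

/-!
Let `p = (a, ab)` and `q = (b, bc)`. If a maximal gradient vector field `W ∋ q` missed `p`, then
`W ∪ {p}` would still be gradient, contradicting maximality. Since `ab` is the only edge at `a`,
the only pair other than `p` sharing a simplex with `p` is `(b, ab)`, which cannot lie in `W`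
next to `q` (both contain `b` as their lower simplex). And `{a}` is a free face of `ab`, so a
closed path through `p` would have to enter it from a pair with upper simplex `ab`, i.e. `p`
itself or a pair clashing with `p`.
-/

lemma SComplex.nonempty_of_faces {V : Type*} {K : SComplex V} {σ : Finset V} (h : K.faces σ) :
    σ.Nonempty :=
  nonempty_iff_ne_empty.2 fun he => K.not_empty (he ▸ h)

lemma IsFacet.mem_of_faces_insert {V : Type*} [DecidableEq V] {K : SComplex V} {σ : Finset V}
    {x : V} (hσ : IsFacet K σ) (h : K.faces (insert x σ)) : x ∈ σ := by
  rw [hσ.2 _ h (subset_insert x σ)]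
  exact mem_insert_self x σ

namespace VPair

variable {V : Type*} {K : SComplex V}

lemma ext {p q : VPair K} (hlo : p.lo = q.lo) (hhi : p.hi = q.hi) : p = q := by
  cases p; cases q; simp_all

lemma one_lt_card_hi (p : VPair K) : 1 < p.hi.card := by
  have := (SComplex.nonempty_of_faces p.lo_face).card_pos
  rw [p.card_eq]
  omega

lemma lo_eq_of_hi_eq_pair [DecidableEq V] {p : VPair K} {x y : V} (hxy : x ≠ y)
    (h : p.hi = {x, y}) : p.lo = {x} ∨ p.lo = {y} := by
  have hcard : p.lo.card = 1 := by
    have := p.card_eq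
    rw [h, card_pair hxy] at this
    omega
  obtain ⟨z, hz⟩ := card_eq_one.mp hcard
  have hz_mem : z ∈ ({x, y} : Finset V) := h ▸ p.lo_sub (hz ▸ mem_singleton_self z)
  rcases mem_insert.mp hz_mem with rfl | hzy
  · exact .inl hz
  · exact .inr (mem_singleton.mp hzy ▸ hz)

end VPair

section GradientVectorFields

variable {V : Type*} {K : SComplex V}

lemma IsDVF.eq_of_lo_eq {W : Set (VPair K)} (hW : IsDVF W) {p q : VPair K} (hp : p ∈ W)
    (hq : q ∈ W) (hlo : p.lo = q.lo) : p = q := by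
  by_contra hne
  exact (hW p hp q hq hne).1 hlo

lemma IsDVF.insert {W : Set (VPair K)} {p : VPair K} (hW : IsDVF W)
    (hp : ∀ r ∈ W, r ≠ p → p.Compatible r) : IsDVF (insert p W) := by
  rintro r₁ (rfl | h₁) r₂ (rfl | h₂) hne
  · exact absurd rfl hne
  · exact hp r₂ h₂ hne.symm
  · exact (hp r₁ h₁ hne).symm
  · exact hW r₁ h₁ r₂ h₂ hne

lemma not_hasClosedPath_insert {W : Set (VPair K)} {p : VPair K} (hW : ¬ HasClosedPath W)
    (hfree : ∀ τ, K.faces τ → p.lo ⊆ τ → τ.card = p.lo.card + 1 → τ = p.hi)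
    (hhi : ∀ r ∈ W, r.hi ≠ p.hi) : ¬ HasClosedPath (insert p W) := by
  rintro ⟨k, hk, γ, hγ, hstep⟩
  by_cases hall : ∀ i, γ i ∈ W
  · exact hW ⟨k, hk, γ, hall, hstep⟩
  obtain ⟨j, hj⟩ := not_forall.mp hall
  have hγj : γ j = p := (hγ j).resolve_right hj
  obtain ⟨hsub, hne, hcard⟩ := hstep (j - 1)
  rw [sub_add_cancel, hγj] at hsub hne hcard
  have hprev : (γ (j - 1)).hi = p.hi := hfree _ (γ (j - 1)).hi_face hsub hcard.symm
  rcases hγ (j - 1) with hp | hmem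
  · exact hne (by rw [hp])
  · exact hhi _ hmem hprev

end GradientVectorFields

section Leaf

variable {V : Type*} [DecidableEq V] {K : SComplex V} {a b : V}

lemma edge_eq_of_sdeg_eq_one (hab : a ≠ b) (hfab : K.faces {a, b}) (hdeg : sdeg K a = 1)
    {e : Finset V} (he : K.faces e) (hcard : e.card = 2) (hae : a ∈ e) : e = {a, b} := by
  obtain ⟨e₀, he₀⟩ := Set.ncard_eq_one.mp hdeg
  have h₁ : e ∈ ({e₀} : Set (Finset V)) := he₀ ▸ ⟨he, hcard, hae⟩
  have h₂ : ({a, b} : Finset V) ∈ ({e₀} : Set (Finset V)) :=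
    he₀ ▸ ⟨hfab, card_pair hab, mem_insert_self a {b}⟩
  exact h₁.trans h₂.symm

-- The upper simplex of such a pair would contain a second edge at `a`.
lemma VPair.lo_ne_leaf (hleaf : ∀ e, K.faces e → e.card = 2 → a ∈ e → e = {a, b})
    (r : VPair K) : r.lo ≠ {a, b} := by
  intro h
  obtain ⟨d, hd_hi, hd_lo⟩ : ∃ d ∈ r.hi, d ∉ r.lo :=
    exists_mem_notMem_of_card_lt_card (by rw [r.card_eq]; omega)
  rw [h] at hd_lo
  have ha_hi : a ∈ r.hi := r.lo_sub (h ▸ mem_insert_self a {b})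
  have hda : d ≠ a := fun hd => hd_lo (hd ▸ mem_insert_self a {b})
  have hedge : K.faces {a, d} :=
    K.down_closed r.hi_face (insert_subset ha_hi (singleton_subset_iff.2 hd_hi))
      (insert_nonempty _ _)
  have hd_ab : d ∈ ({a, b} : Finset V) :=
    hleaf _ hedge (card_pair hda.symm) (mem_insert_self a {d}) ▸ by simp
  exact hd_lo hd_ab

lemma edgePair_compatible (hleaf : ∀ e, K.faces e → e.card = 2 → a ∈ e → e = {a, b})
    (hab : a ≠ b) (hfab : K.faces {a, b}) {r : VPair K} (hr : r ≠ edgePair K a b hab hfab) (hrb : r.lo = {b} → r.hi ≠ {a, b}) :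
    (edgePair K a b hab hfab).Compatible r := by
  have hra : r.lo = {a} → r.hi ≠ {a, b} := fun hlo hhi => hr (VPair.ext hlo hhi)
  refine ⟨fun h => hra h.symm ?_, fun h => ?_, fun h => r.lo_ne_leaf hleaf h.symm, fun h => ?_⟩
  · exact hleaf _ r.hi_face (by rw [r.card_eq, ← h]; rfl) (r.lo_sub (h ▸ mem_singleton_self a))
  · have := r.one_lt_card_hi
    rw [← h] at this
    exact this.ne rfl
  · rcases VPair.lo_eq_of_hi_eq_pair hab h.symm with hlo | hlo
    · exact hra hlo h.symm
    · exact hrb hlo h.symm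

end Leaf

theorem stmt_5_general {V : Type*} [DecidableEq V] (K : SComplex V) (a b c : V)
    (hab : a ≠ b) (hbc : b ≠ c) (hca : c ≠ a)
    (hfab : K.faces {a, b}) (hdega : sdeg K a = 1) (hfbc : K.faces {b, c}) :
    Dominates (MorseComplex K) (edgePair K a b hab hfab) (edgePair K b c hbc hfbc) := by
  intro σ hσ hq
  by_contra hp
  obtain ⟨-, hdvf, hnc⟩ := hσ.1
  have hleaf : ∀ e, K.faces e → e.card = 2 → a ∈ e → e = {a, b} :=
    fun _ => edge_eq_of_sdeg_eq_one hab hfab hdega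
  have hno_b_ab : ∀ r ∈ σ, r.lo = {b} → r.hi ≠ {a, b} := by
    intro r hr hlo hhi
    obtain rfl : r = edgePair K b c hbc hfbc := hdvf.eq_of_lo_eq hr hq hlo
    have ha : a ∈ (edgePair K b c hbc hfbc).hi := hhi ▸ mem_insert_self a {b}
    simp [edgePair, hab, hca.symm] at ha
  have hcompat : ∀ r ∈ σ, r ≠ edgePair K a b hab hfab →
      (edgePair K a b hab hfab).Compatible r :=
    fun r hr hne => edgePair_compatible hleaf hab hfab hne (hno_b_ab r hr)
  refine hp (hσ.mem_of_faces_insert ⟨insert_nonempty _ _, ?_⟩)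
  rw [show {r | r ∈ insert _ σ} = insert _ {r | r ∈ σ} from coe_insert _ σ]
  exact ⟨hdvf.insert hcompat,
    not_hasClosedPath_insert hnc
      (fun τ hτ hsub hcard => hleaf τ hτ hcard (singleton_subset_iff.1 hsub))
      fun r hr => (hcompat r hr (ne_of_mem_of_not_mem hr hp)).2.2.2.symm⟩

/-- if `{a, ab}` is a leaf of `K` and `c ≠ a` is a neighbor of `b`,
then the vertex `(b, bc)` of `M(K)` is dominated by `(a, ab)`. -/
theorem stmt_5 {V : Type*} [Fintype V] [DecidableEq V] (K : SComplex V) (a b c : V)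
    (hab : a ≠ b) (hbc : b ≠ c) (hca : c ≠ a)
    (hfab : K.faces {a, b}) (hdega : sdeg K a = 1) (hfbc : K.faces {b, c}) :
    Dominates (MorseComplex K) (edgePair K a b hab hfab) (edgePair K b c hbc hfbc) :=
  stmt_5_general K a b c hab hbc hca hfab hdega hfbc
end
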